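/- Let R ∈ ℝ^m and S ∈ ℝ^n be nonnegative real vectors with equal component sums. There exists an m×n nonnegative real matrix with row sum vector R and column sum vector S invariant under both r_0 and r_∞ if and only if there exists such a matrix invariant under r_∞ and there exists such a matrix invariant under r_0. The same equivalence holds for nonnegative integer matrices when R and S are nonnegative integer vectors. -/

import Mathlib

/-!
Averaging an `r_∞`-invariant real matrix with its `r_0`-reflection gives a `D_+`-invariant one,
because the existence of an `r_0`-invariant matrix forces `R` to be symmetric.

In the integral case a `D_+`-invariant matrix is determined by its quarter on the representatives
`min i i.rev`, `min j j.rev`; its margins are those of the quarter, with weight 2 on the paired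
indices and 1 on the middle one. An `r_∞`-invariant matrix makes `S` symmetric and each `R i`
congruent mod 2 to its middle-column entry, so `∑ i, R i % 2` is at most the middle column sum
(zero when `n` is even); symmetrically for `r_0`. Conversely, under these conditions one chooses
the centre entry and the halves of the middle row and column with the right parities, and fills
the rest of the quarter with an ordinary integral transportation matrix.
-/

open Finset Function
open scoped Matrix

namespace Finset

variable {ι κ : Type*}

theorem exists_le_sum_eq (s : Finset ι) (c : ι → ℕ) {t : ℕ} (ht : t ≤ ∑ i ∈ s, c i) :
    ∃ u ≤ c, ∑ i ∈ s, u i = t := by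
  classical
  induction s using Finset.induction_on generalizing t with
  | empty => exact ⟨0, fun _ => Nat.zero_le _, by simp_all⟩
  | insert a s ha ih =>
    rw [sum_insert ha] at ht
    obtain ⟨u, hu, hsum⟩ := ih (t := t - min t (c a)) (by omega)
    refine ⟨update u a (min t (c a)), fun i => ?_, ?_⟩
    · rcases eq_or_ne i a with rfl | hi
      · simp
      · simpa [hi] using hu i
    · rw [sum_insert ha, update_self, sum_update_of_notMem ha, hsum]
      omega

theorem exists_add_two_mul_eq_sum_eq (s : Finset ι) (r : ι → ℕ) {t : ℕ}
    (hlo : ∑ i ∈ s, r i % 2 ≤ t) (hhi : t ≤ ∑ i ∈ s, r i)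
    (hpar : t % 2 = (∑ i ∈ s, r i) % 2) :
    ∃ x k : ι → ℕ, (∀ i, x i + 2 * k i = r i) ∧ ∑ i ∈ s, x i = t := by
  have hsplit : ∑ i ∈ s, r i % 2 + 2 * ∑ i ∈ s, r i / 2 = ∑ i ∈ s, r i := by
    rw [mul_sum, ← sum_add_distrib]
    exact sum_congr rfl fun i _ => Nat.mod_add_div (r i) 2
  have hmod : (∑ i ∈ s, r i % 2) % 2 = (∑ i ∈ s, r i) % 2 := (sum_nat_mod _ _ _).symm
  obtain ⟨u, hu, hsum⟩ := s.exists_le_sum_eq (fun i => r i / 2)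
    (t := (t - ∑ i ∈ s, r i % 2) / 2) (by omega)
  refine ⟨fun i => r i % 2 + 2 * u i, fun i => r i / 2 - u i, fun i => ?_, ?_⟩
  · have hui : u i ≤ r i / 2 := hu i
    have := Nat.mod_add_div (r i) 2
    show r i % 2 + 2 * u i + 2 * (r i / 2 - u i) = r i
    omega
  · rw [sum_add_distrib, ← mul_sum, hsum]
    omega

theorem two_mul_sum_add_sum (s : Finset ι) {r a b : ι → ℕ} (h : ∀ i, a i + 2 * b i = r i) :
    2 * ∑ i ∈ s, b i + ∑ i ∈ s, a i = ∑ i ∈ s, r i := by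
  rw [mul_sum, ← sum_add_distrib]
  exact sum_congr rfl fun i _ => by rw [← h, add_comm]

theorem exists_transport (s : Finset ι) (t : Finset κ) (r : ι → ℕ) (c : κ → ℕ)
    (h : ∑ i ∈ s, r i = ∑ j ∈ t, c j) :
    ∃ Q : ι → κ → ℕ, (∀ i ∈ s, ∑ j ∈ t, Q i j = r i) ∧ ∀ j ∈ t, ∑ i ∈ s, Q i j = c j := by
  classical
  induction s using Finset.induction_on generalizing c with
  | empty =>
    refine ⟨0, by simp, fun j hj => ?_⟩
    simp only [sum_empty] at h ⊢
    exact ((sum_eq_zero_iff.1 h.symm) j hj).symm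
  | insert a s ha ih =>
    rw [sum_insert ha] at h
    obtain ⟨u, hu, hsum⟩ := t.exists_le_sum_eq c (t := r a) (by omega)
    obtain ⟨Q, hrow, hcol⟩ := ih (fun j => c j - u j) (by
      rw [sum_tsub_distrib _ fun j _ => hu j, hsum]; omega)
    refine ⟨update Q a u, fun i hi => ?_, fun j hj => ?_⟩
    · rcases mem_insert.1 hi with rfl | hi
      · simpa using hsum
      · rw [update_of_ne (ne_of_mem_of_not_mem hi ha)]; exact hrow i hi
    · have hQ : ∑ i ∈ s, update Q a u i j = ∑ i ∈ s, Q i j :=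
        sum_congr rfl fun i hi => by rw [update_of_ne (ne_of_mem_of_not_mem hi ha)]
      rw [sum_insert ha, update_self, hQ, hcol j hj]
      exact Nat.add_sub_cancel' (hu j)

end Finset

namespace Function.Involutive

variable {ι : Type*} [LinearOrder ι] {σ : ι → ι}

theorem min_le_apply_min (hσ : Involutive σ) (i : ι) : min i (σ i) ≤ σ (min i (σ i)) := by
  rcases le_total i (σ i) with h | h
  · rwa [min_eq_left h]
  · rwa [min_eq_right h, hσ]

theorem min_apply_apply (hσ : Involutive σ) (i : ι) : min (σ i) (σ (σ i)) = min i (σ i) := by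
  rw [hσ, min_comm]

variable [Fintype ι] {M : Type*} [AddCommMonoid M]

theorem sum_comp_min (hσ : Involutive σ) (g : ι → M) :
    ∑ i, g (min i (σ i)) = 2 • ∑ i with i < σ i, g i + ∑ i with σ i = i, g i := by
  have hflip : ∑ i, (if σ i < i then g (σ i) else 0) = ∑ i, if i < σ i then g i else 0 := by
    simpa only [Involutive.coe_toPerm, hσ _] using
      Equiv.sum_comp hσ.toPerm fun i => if i < σ i then g i else 0
  have hsplit : ∀ i, g (min i (σ i)) = (if i < σ i then g i else 0) +
      (if σ i = i then g i else 0) + (if σ i < i then g (σ i) else 0) := by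
    intro i
    rcases lt_trichotomy i (σ i) with h | h | h
    · simp [h, h.ne', h.not_gt, min_eq_left h.le]
    · simp [← h]
    · simp [h, h.ne, h.not_gt, min_eq_right h.le]
  simp only [hsplit, sum_add_distrib, hflip, sum_filter, two_nsmul]
  exact add_right_comm _ _ _

theorem sum_eq_of_invariant (hσ : Involutive σ) (f : ι → M) (hf : ∀ i, f i = f (σ i)) :
    ∑ i, f i = 2 • ∑ i with i < σ i, f i + ∑ i with σ i = i, f i := by
  rw [← hσ.sum_comp_min]
  refine sum_congr rfl fun i _ => ?_
  rcases min_choice i (σ i) with h | h <;> rw [h]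
  exact hf i

end Function.Involutive

/-- `z` is the centre entry, `u` and `v` the sums of the middle column and row over the lower
half; the parities of `u` and `v` force `z ≡ s - 2 * ρ [MOD 4]`. -/
theorem exists_center_split {α ρ β σ r s : ℕ} (hαρ : α ≤ ρ) (hαρ₂ : α % 2 = ρ % 2)
    (hβσ : β ≤ σ) (hβσ₂ : β % 2 = σ % 2) (htot : 2 * ρ + r = 2 * σ + s)
    (hs : 2 * α + r % 2 ≤ s) (hr : 2 * β + s % 2 ≤ r) :
    ∃ z u v : ℕ, (α ≤ u ∧ u ≤ ρ ∧ u % 2 = ρ % 2) ∧ (β ≤ v ∧ v ≤ σ ∧ v % 2 = σ % 2) ∧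
      2 * u + z = s ∧ 2 * v + z = r := by
  rcases le_or_gt (2 * ρ) s with h | h
  · exact ⟨s - 2 * ρ, ρ, σ, by omega⟩
  · refine ⟨(s - 2 * α) % 4, (s - (s - 2 * α) % 4) / 2, (r - (s - 2 * α) % 4) / 2, ?_⟩
    omega

section Quarter

variable {ι κ : Type*} [LinearOrder ι] [LinearOrder κ] {σ : ι → ι} {τ : κ → κ}

theorem sum_fixed_eq_apply (hσ₁ : (fixedPoints σ).Subsingleton) [Fintype ι]
    {M : Type*} [AddCommMonoid M] (f : ι → M) {p : ι} (hp : σ p = p) :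
    ∑ i with σ i = i, f i = f p :=
  sum_eq_single_of_mem p (by simpa using hp) fun i hi hip =>
    (hip (hσ₁ (mem_filter.1 hi).2 hp)).elim

/-- The matrix on representatives `p ≤ σ p`, `q ≤ τ q`: `Q` off the fixed rows and columns,
`x` on the fixed column, `y` on the fixed row and `z` at the centre. -/
def quarter (σ : ι → ι) (τ : κ → κ) (Q : ι → κ → ℕ) (x : ι → ℕ) (y : κ → ℕ) (z : ℕ) :
    ι → κ → ℕ :=
  fun p q => if σ p = p then (if τ q = q then z else y q) else if τ q = q then x p else Q p q

def symmExtend (σ : ι → ι) (τ : κ → κ) (G : ι → κ → ℕ) : Matrix ι κ ℕ :=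
  fun i j => G (min i (σ i)) (min j (τ j))

theorem symmExtend_apply_right (hτ : Involutive τ) (G : ι → κ → ℕ) (i : ι) (j : κ) :
    symmExtend σ τ G i j = symmExtend σ τ G i (τ j) := by
  simp only [symmExtend, hτ.min_apply_apply]

theorem symmExtend_apply_left (hσ : Involutive σ) (G : ι → κ → ℕ) (i : ι) (j : κ) :
    symmExtend σ τ G i j = symmExtend σ τ G (σ i) j := by
  simp only [symmExtend, hσ.min_apply_apply]

theorem transpose_symmExtend_quarter (Q : ι → κ → ℕ) (x : ι → ℕ) (y : κ → ℕ) (z : ℕ) :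
    (symmExtend σ τ (quarter σ τ Q x y z))ᵀ =
      symmExtend τ σ (quarter τ σ (fun q p => Q p q) y x z) := by
  ext j i
  simp only [Matrix.transpose_apply, symmExtend, quarter]
  split_ifs <;> rfl

variable [Fintype ι] [Fintype κ]

theorem sum_symmExtend_quarter (hσ : Involutive σ) (hτ : Involutive τ)
    (hσ₁ : (fixedPoints σ).Subsingleton) (hτ₁ : (fixedPoints τ).Subsingleton)
    {R : ι → ℕ} {S : κ → ℕ} (hR : ∀ i, R i = R (σ i))
    {Q : ι → κ → ℕ} {x : ι → ℕ} {y : κ → ℕ} {z : ℕ}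
    (hQ : ∀ p, p < σ p → 2 * ∑ q with q < τ q, Q p q + x p = R p)
    (hy : 2 * ∑ q with q < τ q, y q + z = ∑ p with σ p = p, R p)
    (hx : 2 * ∑ p with p < σ p, x p + z = ∑ q with τ q = q, S q) (i : ι) :
    ∑ j, symmExtend σ τ (quarter σ τ Q x y z) i j = R i := by
  set p := min i (σ i) with hp
  have hRp : R p = R i := by rcases min_choice i (σ i) with h | h <;> simp only [hp, h, ← hR]
  have hpσ : p ≤ σ p := hσ.min_le_apply_min i
  set c := if σ p = p then z else x p
  have hlower : ∀ q ∈ ({q | q < τ q} : Finset κ),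
      quarter σ τ Q x y z p q = if σ p = p then y q else Q p q := fun q hq => by
    simp [quarter, (mem_filter.1 hq).2.ne']
  have hfixed : ∀ q ∈ ({q | τ q = q} : Finset κ), quarter σ τ Q x y z p q = c :=
    fun q hq => by simp [quarter, (mem_filter.1 hq).2, c]
  -- without a fixed column, `hx` forces `z` and the lower part of `x` to vanish
  have hc : ∑ q with τ q = q, c = c := by
    rcases ({q | τ q = q} : Finset κ).eq_empty_or_nonempty with he | ⟨q, hq⟩
    · rw [he, sum_empty] at hx
      have hx0 := sum_eq_zero_iff.1 (show ∑ p with p < σ p, x p = 0 by omega)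
      rw [he, sum_empty]
      by_cases hfix : σ p = p
      · simp only [c, if_pos hfix]; omega
      · simp only [c, if_neg hfix]
        exact (hx0 p (by simpa using lt_of_le_of_ne hpσ (Ne.symm hfix))).symm
    · exact sum_fixed_eq_apply hτ₁ (fun _ => c) (by simpa using hq)
  show ∑ j, quarter σ τ Q x y z p (min j (τ j)) = R i
  rw [hτ.sum_comp_min, sum_congr rfl hlower, sum_congr rfl hfixed, hc, smul_eq_mul, ← hRp]
  by_cases hfix : σ p = p
  · simp only [c, if_pos hfix]
    rw [hy, sum_fixed_eq_apply hσ₁ R hfix]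
  · simp only [c, if_neg hfix]
    exact hQ p (lt_of_le_of_ne hpσ (Ne.symm hfix))

end Quarter

section Transport

variable {ι κ : Type*} [Fintype ι] [Fintype κ] [LinearOrder κ] {τ : κ → κ}

theorem sum_mod_two_le_sum_fixed (hτ : Involutive τ) (A : Matrix ι κ ℕ)
    (hA : ∀ i j, A i j = A i (τ j)) :
    ∑ i, (∑ j, A i j) % 2 ≤ ∑ j with τ j = j, ∑ i, A i j := by
  rw [sum_comm]
  refine sum_le_sum fun i _ => ?_
  rw [hτ.sum_eq_of_invariant (A i) (hA i), smul_eq_mul, Nat.mul_add_mod]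
  exact Nat.mod_le _ _

variable [LinearOrder ι] {σ : ι → ι}

theorem sum_mod_two_eq_of_invariant (hσ : Involutive σ)
    (hσ₁ : (fixedPoints σ).Subsingleton) {R : ι → ℕ} (hR : ∀ i, R i = R (σ i)) :
    ∑ i, R i % 2 = 2 * ∑ i with i < σ i, R i % 2 + (∑ i with σ i = i, R i) % 2 := by
  rw [hσ.sum_eq_of_invariant (fun i => R i % 2) fun i => by rw [← hR], smul_eq_mul]
  congr 1
  rcases ({i | σ i = i} : Finset ι).eq_empty_or_nonempty with he | ⟨p, hp⟩
  · simp [he]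
  · have hp : σ p = p := by simpa using hp
    rw [sum_fixed_eq_apply hσ₁ (fun i => R i % 2) hp, sum_fixed_eq_apply hσ₁ R hp]

theorem exists_invariant_of_parity (hσ : Involutive σ) (hτ : Involutive τ)
    (hσ₁ : (fixedPoints σ).Subsingleton) (hτ₁ : (fixedPoints τ).Subsingleton)
    {R : ι → ℕ} {S : κ → ℕ} (hR : ∀ i, R i = R (σ i)) (hS : ∀ j, S j = S (τ j))
    (hsum : ∑ i, R i = ∑ j, S j)
    (hRS : ∑ i, R i % 2 ≤ ∑ j with τ j = j, S j) (hSR : ∑ j, S j % 2 ≤ ∑ i with σ i = i, R i) :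
    ∃ C : Matrix ι κ ℕ, (∀ i, ∑ j, C i j = R i) ∧ (∀ j, ∑ i, C i j = S j) ∧
      (∀ i j, C i j = C i (τ j)) ∧ ∀ i j, C i j = C (σ i) j := by
  rw [hσ.sum_eq_of_invariant R hR, hτ.sum_eq_of_invariant S hS, smul_eq_mul, smul_eq_mul] at hsum
  rw [sum_mod_two_eq_of_invariant hσ hσ₁ hR] at hRS
  rw [sum_mod_two_eq_of_invariant hτ hτ₁ hS] at hSR
  obtain ⟨z, u, v, ⟨hu₁, hu₂, hu₃⟩, ⟨hv₁, hv₂, hv₃⟩, hx, hy⟩ := exists_center_split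
    (sum_le_sum fun i _ => Nat.mod_le (R i) 2) (sum_nat_mod _ _ _).symm
    (sum_le_sum fun j _ => Nat.mod_le (S j) 2) (sum_nat_mod _ _ _).symm hsum hRS hSR
  obtain ⟨x, a, hxa, rfl⟩ := exists_add_two_mul_eq_sum_eq _ R hu₁ hu₂ hu₃
  obtain ⟨y, b, hyb, rfl⟩ := exists_add_two_mul_eq_sum_eq _ S hv₁ hv₂ hv₃
  have hR₂ := two_mul_sum_add_sum ({i | i < σ i} : Finset ι) hxa
  have hS₂ := two_mul_sum_add_sum ({j | j < τ j} : Finset κ) hyb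
  obtain ⟨Q, hQr, hQc⟩ := exists_transport {i | i < σ i} {j | j < τ j} a b (by omega)
  refine ⟨symmExtend σ τ (quarter σ τ Q x y z), fun i => ?_, fun j => ?_,
    symmExtend_apply_right hτ _, symmExtend_apply_left hσ _⟩
  · refine sum_symmExtend_quarter hσ hτ hσ₁ hτ₁ hR (fun p hp => ?_) hy hx i
    rw [hQr p (by simpa using hp), ← hxa p, add_comm]
  · have hcol := sum_symmExtend_quarter hτ hσ hτ₁ hσ₁ hS (Q := fun q p => Q p q)
      (fun q hq => by rw [hQc q (by simpa using hq), ← hyb q, add_comm]) hx hy j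
    rwa [← transpose_symmExtend_quarter] at hcol

theorem exists_invariant_of_invariant_pair (hσ : Involutive σ) (hτ : Involutive τ)
    (hσ₁ : (fixedPoints σ).Subsingleton) (hτ₁ : (fixedPoints τ).Subsingleton)
    (A B : Matrix ι κ ℕ) (hAτ : ∀ i j, A i j = A i (τ j)) (hBσ : ∀ i j, B i j = B (σ i) j)
    (hrow : ∀ i, ∑ j, B i j = ∑ j, A i j) (hcol : ∀ j, ∑ i, B i j = ∑ i, A i j) :
    ∃ C : Matrix ι κ ℕ, (∀ i, ∑ j, C i j = ∑ j, A i j) ∧ (∀ j, ∑ i, C i j = ∑ i, A i j) ∧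
      (∀ i j, C i j = C i (τ j)) ∧ ∀ i j, C i j = C (σ i) j := by
  refine exists_invariant_of_parity hσ hτ hσ₁ hτ₁ (fun i => ?_) (fun j => sum_congr rfl
    fun i _ => hAτ i j) sum_comm (sum_mod_two_le_sum_fixed hτ A hAτ) ?_
  · simp only [← hrow]
    exact sum_congr rfl fun j _ => hBσ i j
  · have hB := sum_mod_two_le_sum_fixed hσ Bᵀ fun j i => hBσ i j
    simpa only [Matrix.transpose_apply, hrow, hcol] using hB

end Transport

theorem exists_invariant_of_average {K ι κ : Type*} [Field K] [LinearOrder K]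
    [IsStrictOrderedRing K] [Fintype ι] [Fintype κ] {σ : ι → ι} {τ : κ → κ}
    (hσ : Involutive σ) {R : ι → K} {S : κ → K} (A : Matrix ι κ K) (hA : ∀ i j, 0 ≤ A i j)
    (hAR : ∀ i, ∑ j, A i j = R i) (hAS : ∀ j, ∑ i, A i j = S j)
    (hAτ : ∀ i j, A i j = A i (τ j)) (hR : ∀ i, R i = R (σ i)) :
    ∃ C : Matrix ι κ K, (∀ i j, 0 ≤ C i j) ∧ (∀ i, ∑ j, C i j = R i) ∧
      (∀ j, ∑ i, C i j = S j) ∧ (∀ i j, C i j = C i (τ j)) ∧ ∀ i j, C i j = C (σ i) j := by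
  refine ⟨Matrix.of fun i j => (A i j + A (σ i) j) / 2, fun i j => ?_, fun i => ?_, fun j => ?_,
    fun i j => ?_, fun i j => ?_⟩ <;> simp only [Matrix.of_apply]
  · exact div_nonneg (add_nonneg (hA i j) (hA (σ i) j)) zero_le_two
  · rw [← sum_div, sum_add_distrib, hAR, hAR, ← hR, add_self_div_two]
  · have hflip : ∑ i, A (σ i) j = ∑ i, A i j := Equiv.sum_comp hσ.toPerm fun i => A i j
    rw [← sum_div, sum_add_distrib, hflip, hAS, add_self_div_two]
  · rw [hAτ i j, hAτ (σ i) j]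
  · rw [hσ, add_comm]

theorem Fin.subsingleton_fixedPoints_rev {n : ℕ} :
    (fixedPoints (Fin.rev : Fin n → Fin n)).Subsingleton := by
  intro i (hi : i.rev = i) i' (hi' : i'.rev = i')
  rw [Fin.ext_iff, Fin.val_rev] at hi hi'
  exact Fin.ext (by omega)

theorem klein_axes_transportation (m n : ℕ) (R : Fin m → ℝ) (S : Fin n → ℝ) :
    ((∃ A : Matrix (Fin m) (Fin n) ℝ,
        (∀ i j, 0 ≤ A i j) ∧
        (∀ i, ∑ j, A i j = R i) ∧
        (∀ j, ∑ i, A i j = S j) ∧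
        (∀ i j, A i j = A i j.rev) ∧
        (∀ i j, A i j = A i.rev j)) ↔
      ((∃ A : Matrix (Fin m) (Fin n) ℝ,
          (∀ i j, 0 ≤ A i j) ∧
          (∀ i, ∑ j, A i j = R i) ∧
          (∀ j, ∑ i, A i j = S j) ∧
          (∀ i j, A i j = A i j.rev)) ∧
        (∃ A : Matrix (Fin m) (Fin n) ℝ,
          (∀ i j, 0 ≤ A i j) ∧
          (∀ i, ∑ j, A i j = R i) ∧
          (∀ j, ∑ i, A i j = S j) ∧
          (∀ i j, A i j = A i.rev j))))
    ∧ ((∀ i, ∃ k : ℕ, R i = k) → (∀ j, ∃ k : ℕ, S j = k) →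
      ((∃ A : Matrix (Fin m) (Fin n) ℕ,
          (∀ i, ((∑ j, A i j : ℕ) : ℝ) = R i) ∧
          (∀ j, ((∑ i, A i j : ℕ) : ℝ) = S j) ∧
          (∀ i j, A i j = A i j.rev) ∧
          (∀ i j, A i j = A i.rev j)) ↔
        ((∃ A : Matrix (Fin m) (Fin n) ℕ,
            (∀ i, ((∑ j, A i j : ℕ) : ℝ) = R i) ∧
            (∀ j, ((∑ i, A i j : ℕ) : ℝ) = S j) ∧
            (∀ i j, A i j = A i j.rev)) ∧
          (∃ A : Matrix (Fin m) (Fin n) ℕ,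
            (∀ i, ((∑ j, A i j : ℕ) : ℝ) = R i) ∧
            (∀ j, ((∑ i, A i j : ℕ) : ℝ) = S j) ∧
            (∀ i j, A i j = A i.rev j))))) := by
  refine ⟨⟨fun ⟨A, hA, hR, hS, hinf, hzero⟩ => ⟨⟨A, hA, hR, hS, hinf⟩, ⟨A, hA, hR, hS, hzero⟩⟩, ?_⟩,
    fun _ _ => ⟨fun ⟨A, hR, hS, hinf, hzero⟩ => ⟨⟨A, hR, hS, hinf⟩, ⟨A, hR, hS, hzero⟩⟩, ?_⟩⟩
  · rintro ⟨⟨A, hA, hAR, hAS, hAinf⟩, ⟨B, -, hBR, -, hBzero⟩⟩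
    exact exists_invariant_of_average Fin.rev_involutive A hA hAR hAS hAinf fun i => by
      simp only [← hBR]; exact sum_congr rfl fun j _ => hBzero i j
  · rintro ⟨⟨A, hAR, hAS, hAinf⟩, ⟨B, hBR, hBS, hBzero⟩⟩
    obtain ⟨C, hCR, hCS, hCinf, hCzero⟩ := exists_invariant_of_invariant_pair Fin.rev_involutive
      Fin.rev_involutive Fin.subsingleton_fixedPoints_rev
      Fin.subsingleton_fixedPoints_rev A B hAinf hBzero
      (fun i => Nat.cast_injective ((hBR i).trans (hAR i).symm))
      (fun j => Nat.cast_injective ((hBS j).trans (hAS j).symm))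
    exact ⟨C, fun i => by rw [hCR, hAR], fun j => by rw [hCS, hAS], hCinf, hCzero⟩
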